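/- arXiv:2012.01762 — 5 statements merged into one kernel-verified Lean document; each statement's English description precedes it below -/
import Mathlib

section
/- Let V be a finite-dimensional real vector space and B a Minkowski form on V with distinguished vector κ₀. Let m, e ∈ V satisfy B(m, κ₀) = 1, B(e, κ₀) = 1, B(m, e) = 0, and 0 < B(m, m) < 1. Then B(e, e) < 0 and −B(e, e) ≥ B(m, m)/(1 − B(m, m)). -/
/-- In a Minkowski form `B` with distinguished vector `κ₀`
(`B κ₀ κ₀ = 1`, `B` negative definite on the orthogonal of `κ₀`),
if `B m κ₀ = 1`, `B e κ₀ = 1`, `B m e = 0` and `0 < B m m < 1`, then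
`B e e < 0` and `-B e e ≥ B m m / (1 - B m m)`. -/
theorem lorentz_orthogonal_lower_bound
    {V : Type*} [AddCommGroup V] [Module ℝ V] [FiniteDimensional ℝ V]
    (B : V →ₗ[ℝ] V →ₗ[ℝ] ℝ) (hsymm : ∀ x y : V, B x y = B y x)
    (κ₀ : V) (hκ : B κ₀ κ₀ = 1)
    (hneg : ∀ v : V, v ≠ 0 → B v κ₀ = 0 → B v v < 0)
    (m e : V) (hm : B m κ₀ = 1) (he : B e κ₀ = 1) (hme : B m e = 0)
    (h0 : 0 < B m m) (h1 : B m m < 1) :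
    B e e < 0 ∧ B m m / (1 - B m m) ≤ -(B e e) := by
  set m' := m - κ₀ with hm'def
  set e' := e - κ₀ with he'def
  have hsκm : B κ₀ m = 1 := by rw [hsymm]; exact hm
  have hsκe : B κ₀ e = 1 := by rw [hsymm]; exact he
  have hek : B e' κ₀ = 0 := by
    simp [he'def, map_sub, LinearMap.sub_apply, he, hκ]
  have ha : B m' m' = B m m - 1 := by
    simp [hm'def, map_sub, LinearMap.sub_apply, hm, hκ, hsκm]
  have hb : B e' e' = B e e - 1 := by
    simp [he'def, map_sub, LinearMap.sub_apply, he, hκ, hsκe]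
  have hc : B m' e' = -1 := by
    simp [hm'def, he'def, map_sub, LinearMap.sub_apply, hm, he, hκ, hsκm, hsκe, hme]
  have hne : e' ≠ 0 := by
    intro h
    rw [h] at hc
    simp at hc
  have hblt : B e' e' < 0 := hneg e' hne hek
  have key : ∀ t : ℝ, B (m' + t • e') (m' + t • e') ≤ 0 := by
    intro t
    by_cases h : m' + t • e' = 0
    · rw [h]; simp
    · have hk : B (m' + t • e') κ₀ = 0 := by
        have hmk : B m' κ₀ = 0 := by
          simp [hm'def, map_sub, LinearMap.sub_apply, hm, hκ]
        simp [map_add, map_smul, LinearMap.add_apply, LinearMap.smul_apply, hmk, hek]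
      exact le_of_lt (hneg _ h hk)
  have expand : ∀ t : ℝ, B (m' + t • e') (m' + t • e') =
      B m' m' + 2 * t * B m' e' + t ^ 2 * B e' e' := by
    intro t
    have hsym' : B e' m' = B m' e' := hsymm e' m'
    simp [map_add, map_smul, LinearMap.add_apply, LinearMap.smul_apply, smul_eq_mul, hsym']
    ring
  have h2 := key (1 / B e' e')
  rw [expand] at h2
  rw [hc, ha, hb] at h2
  have hbne : B e e - 1 ≠ 0 := by rw [← hb]; exact ne_of_lt hblt
  rw [hb] at hblt
  have hinv : (1 / (B e e - 1)) * (B e e - 1) = 1 := by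
    field_simp
  have h3 := mul_nonneg (neg_nonneg.mpr h2) (by linarith : (0:ℝ) ≤ -(B e e - 1))
  have hCS : 1 ≤ (1 - B m m) * (1 - B e e) := by nlinarith [hinv, h3, sq_nonneg (1 / (B e e - 1))]
  have hee : B e e < 0 := by nlinarith
  refine ⟨hee, ?_⟩
  rw [div_le_iff₀ (by linarith : (0:ℝ) < 1 - B m m)]
  nlinarith
end

section
/- Let V be a finite-dimensional real vector space and B a Minkowski form on V with distinguished vector κ₀. Let θ⁺, θ⁻ ∈ V be isotropic vectors (B(θ⁺, θ⁺) = B(θ⁻, θ⁻) = 0) with B(θ⁺, κ₀) = B(θ⁻, κ₀) = 1 and θ⁺ ≠ θ⁻, and set m = (θ⁺ + θ⁻)/2. Then 0 < B(m, m) ≤ 1, and B(m, m) = 1 if and only if m = κ₀. -/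
/-- If `θp`, `θm` are distinct isotropic vectors for a Minkowski form `B`
normalized by `B θp κ₀ = B θm κ₀ = 1`, and `m = (θp + θm)/2`, then `0 < B m m ≤ 1`,
with equality `B m m = 1` iff `m = κ₀`. -/
theorem isotropic_midpoint_selfintersection
    {V : Type*} [AddCommGroup V] [Module ℝ V] [FiniteDimensional ℝ V]
    (B : V →ₗ[ℝ] V →ₗ[ℝ] ℝ) (hsymm : ∀ x y : V, B x y = B y x)
    (κ₀ : V) (hκ : B κ₀ κ₀ = 1)
    (hneg : ∀ v : V, v ≠ 0 → B v κ₀ = 0 → B v v < 0)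
    (θp θm : V) (hp : B θp θp = 0) (hq : B θm θm = 0)
    (hpκ : B θp κ₀ = 1) (hmκ : B θm κ₀ = 1) (hne : θp ≠ θm)
    (m : V) (hmdef : m = (2⁻¹ : ℝ) • (θp + θm)) :
    0 < B m m ∧ B m m ≤ 1 ∧ (B m m = 1 ↔ m = κ₀) := by
  have hsy : B θm θp = B θp θm := hsymm θm θp
  have h1 : B m m = B θp θm / 2 := by
    subst hmdef
    simp only [map_add, map_smul, LinearMap.add_apply, LinearMap.smul_apply, smul_eq_mul,
      hp, hq, hsy]
    ring
  have hw : B (θp - θm) (θp - θm) < 0 := by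
    refine hneg _ (sub_ne_zero.mpr hne) ?_
    simp [map_sub, hpκ, hmκ]
  have hw2 : B (θp - θm) (θp - θm) = -(2 * B θp θm) := by
    simp only [map_sub, LinearMap.sub_apply, hp, hq, hsy]
    ring
  have hpos : 0 < B m m := by rw [h1]; nlinarith [hw2 ▸ hw]
  have hmκ0 : B m κ₀ = 1 := by
    subst hmdef
    simp [map_add, hpκ, hmκ]
    norm_num
  have hκm : B κ₀ m = 1 := (hsymm κ₀ m).trans hmκ0
  refine ⟨hpos, ?_, ?_⟩
  · by_cases h : m = κ₀
    · rw [h, hκ]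
    · have hv : B (m - κ₀) (m - κ₀) < 0 := by
        refine hneg _ (sub_ne_zero.mpr h) ?_
        simp [map_sub, hmκ0, hκ]
      have : B (m - κ₀) (m - κ₀) = B m m - 1 := by
        simp only [map_sub, LinearMap.sub_apply, hκ, hmκ0, hκm]
        ring
      linarith [this ▸ hv]
  · constructor
    · intro he
      by_contra h
      have hv : B (m - κ₀) (m - κ₀) < 0 := by
        refine hneg _ (sub_ne_zero.mpr h) ?_
        simp [map_sub, hmκ0, hκ]
      have : B (m - κ₀) (m - κ₀) = B m m - 1 := by
        simp only [map_sub, LinearMap.sub_apply, hκ, hmκ0, hκm]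
        ring
      rw [this, he] at hv
      linarith
    · intro h; rw [h, hκ]
end

section
/- Let V be a finite-dimensional real vector space and B a Minkowski form on V with distinguished vector κ₀. If g : V → V is a linear isometry of B (that is, B(g x, g y) = B(x, y) for all x, y ∈ V) which is unipotent (g − id is nilpotent), then the fixed subspace ker(g − id) has codimension at most 2 in V; equivalently, the rank of g − id is at most 2. -/
/-- A unipotent isometry of a Minkowski form on a finite-dimensional
real vector space has fixed subspace of codimension at most 2; equivalently,
`g - id` has rank at most 2. -/
theorem unipotent_minkowski_isometry_fixed_codim_le_two
    {V : Type*} [AddCommGroup V] [Module ℝ V] [FiniteDimensional ℝ V]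
    (B : V →ₗ[ℝ] V →ₗ[ℝ] ℝ) (hsymm : ∀ x y : V, B x y = B y x)
    (κ₀ : V) (hκ : B κ₀ κ₀ = 1)
    (hneg : ∀ v : V, v ≠ 0 → B v κ₀ = 0 → B v v < 0)
    (g : Module.End ℝ V)
    (hiso : ∀ x y : V, B (g x) (g y) = B x y)
    (huni : IsNilpotent (g - 1)) :
    Module.finrank ℝ V ≤ Module.finrank ℝ (LinearMap.ker (g - 1)) + 2 ∧
    Module.finrank ℝ (LinearMap.range (g - 1)) ≤ 2 := by
  classical
  set N : Module.End ℝ V := g - 1 with hNdef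
  have hNapp : ∀ x : V, N x = g x - x := by
    intro x; simp [hNdef, LinearMap.sub_apply]
  -- range N is B-orthogonal to ker N
  have h1 : ∀ x y : V, N y = 0 → B (N x) y = 0 := by
    intro x y hy
    have hgy : g y = y := by
      have := hNapp y
      rw [hy] at this
      exact (sub_eq_zero.mp this.symm)
    have : B (N x) y = B (g x) y - B x y := by
      rw [hNapp, map_sub, LinearMap.sub_apply]
    rw [this]
    have h2 : B (g x) y = B x y := by
      conv_lhs => rw [← hgy]
      exact hiso x y
    rw [h2, sub_self]
  -- the basic isometry identity
  have h2 : ∀ x y : V, B (N x) (N y) + B (N x) y + B x (N y) = 0 := by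
    intro x y
    have hx : N x + x = g x := by rw [hNapp]; abel
    have hy : N y + y = g y := by rw [hNapp]; abel
    have h := hiso x y
    rw [← hx, ← hy] at h
    simp only [map_add, LinearMap.add_apply] at h
    linarith
  -- two orthogonal isotropic vectors are linearly dependent
  have L4 : ∀ u v : V, B u u = 0 → B v v = 0 → B u v = 0 → v ≠ 0 →
      ∃ c : ℝ, u = c • v := by
    intro u v huu hvv huv hv
    set a := B u κ₀ with ha
    set b := B v κ₀ with hb'
    have hb : b ≠ 0 := by
      intro h0
      exact absurd hvv (ne_of_lt (hneg v hv h0))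
    set z := b • u - a • v with hz
    have hzκ : B z κ₀ = 0 := by
      simp only [hz, map_sub, map_smul, LinearMap.sub_apply, LinearMap.smul_apply,
        smul_eq_mul, ← ha, ← hb']
      ring
    have hvu : B v u = 0 := by rw [hsymm]; exact huv
    have hzz : B z z = 0 := by
      simp only [hz, map_sub, map_smul, LinearMap.sub_apply, LinearMap.smul_apply,
        smul_eq_mul, huu, hvv, huv, hvu]
      ring
    have hz0 : z = 0 := by
      by_contra h
      exact absurd hzz (ne_of_lt (hneg z h hzκ))
    have hbu : b • u = a • v := sub_eq_zero.mp hz0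
    refine ⟨b⁻¹ * a, ?_⟩
    rw [mul_smul, ← hbu, inv_smul_smul₀ hb]
  set K := LinearMap.ker N with hK
  set Ra := LinearMap.range N with hRa
  set S := Ra ⊓ K with hS
  have hSmem : ∀ u : V, u ∈ S → u ∈ Ra ∧ N u = 0 := by
    intro u hu
    rw [hS, Submodule.mem_inf] at hu
    exact ⟨hu.1, LinearMap.mem_ker.mp hu.2⟩
  have hSorth : ∀ u w : V, u ∈ Ra → N w = 0 → B u w = 0 := by
    rintro u w ⟨x, hx⟩ hw
    rw [← hx]
    exact h1 x w hw
  have hSnull : ∀ u : V, u ∈ S → B u u = 0 := by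
    intro u hu
    obtain ⟨hu1, hu2⟩ := hSmem u hu
    exact hSorth u u hu1 hu2
  have hS1 : Module.finrank ℝ S ≤ 1 := by
    rcases eq_or_ne S ⊥ with h | h
    · rw [h]; simp
    · obtain ⟨v, hvS, hv0⟩ := (Submodule.ne_bot_iff S).mp h
      have hle : S ≤ Submodule.span ℝ {v} := by
        intro u huS
        obtain ⟨c, hc⟩ := L4 u v (hSnull u huS) (hSnull v hvS)
          (hSorth u v (hSmem u huS).1 (hSmem v hvS).2) hv0
        rw [hc]
        exact Submodule.smul_mem _ _ (Submodule.mem_span_singleton_self v)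
      calc Module.finrank ℝ S ≤ Module.finrank ℝ (Submodule.span ℝ {v}) :=
            Submodule.finrank_mono hle
        _ = 1 := finrank_span_singleton hv0
  -- key step: N² kills range N
  obtain ⟨n, hn⟩ := huni
  have hC : ∀ w : V, w ∈ Ra → N (N (N w)) = 0 → N (N w) = 0 := by
    intro w hw h3
    by_contra hne
    set u := N w with hu
    set v := N u with hv
    have hvK : N v = 0 := h3
    have huv : B u v = 0 := h1 w v hvK
    have hvv : B v v = 0 := h1 u v hvK
    obtain ⟨z, hz⟩ := hw
    have hwv : B w v = 0 := by rw [← hz]; exact h1 z v hvK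
    have huu : B u u = 0 := by
      have h' := h2 w u
      rw [← hu, ← hv] at h'
      linarith [huv, hwv]
    obtain ⟨c, hc⟩ := L4 u v huu hvv huv hne
    have h5 : N u = c • N v := by rw [hc, map_smul]
    rw [hvK, smul_zero] at h5
    rw [← hv] at h5
    exact hne h5
  have hdesc : ∀ k : ℕ, ∀ w : V, w ∈ Ra → (N ^ k) w = 0 → N (N w) = 0 := by
    intro k
    induction k with
    | zero =>
      intro w _ h0
      rw [pow_zero, Module.End.one_apply] at h0
      rw [h0]; simp
    | succ k ih =>
      intro w hw hk
      have hk' : (N ^ k) (N w) = 0 := by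
        rw [pow_succ, Module.End.mul_apply] at hk
        exact hk
      exact hC w hw (ih (N w) ⟨w, rfl⟩ hk')
  have hsq : ∀ w : V, w ∈ Ra → N (N w) = 0 := by
    intro w hw
    refine hdesc n w hw ?_
    rw [hn]
    simp
  -- counting
  set f : Ra →ₗ[ℝ] V := N ∘ₗ Ra.subtype with hf
  have hrange : LinearMap.range f ≤ S := by
    rintro _ ⟨⟨w, hw⟩, rfl⟩
    rw [hS, Submodule.mem_inf]
    constructor
    · exact ⟨w, rfl⟩
    · exact LinearMap.mem_ker.mpr (hsq w hw)
  have hrank_f : Module.finrank ℝ (LinearMap.range f) ≤ 1 :=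
    le_trans (Submodule.finrank_mono hrange) hS1
  have hker_f : Module.finrank ℝ (LinearMap.ker f) ≤ 1 := by
    have hmaps : ∀ x : LinearMap.ker f, ((x : Ra) : V) ∈ S := by
      rintro ⟨⟨w, hw⟩, hx⟩
      rw [hS, Submodule.mem_inf]
      refine ⟨hw, LinearMap.mem_ker.mpr ?_⟩
      exact hx
    set ψ : LinearMap.ker f →ₗ[ℝ] S :=
      LinearMap.codRestrict S (Ra.subtype ∘ₗ (LinearMap.ker f).subtype) hmaps with hψ
    have hinj : Function.Injective ψ := by
      intro x y hxy
      have h6 := Subtype.ext_iff.mp hxy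
      exact Subtype.ext (Subtype.ext h6)
    calc Module.finrank ℝ (LinearMap.ker f) ≤ Module.finrank ℝ S :=
          LinearMap.finrank_le_finrank_of_injective hinj
      _ ≤ 1 := hS1
  have hRa2 : Module.finrank ℝ Ra ≤ 2 := by
    have := LinearMap.finrank_range_add_finrank_ker f
    omega
  have hrn := LinearMap.finrank_range_add_finrank_ker N
  rw [← hRa, ← hK] at hrn
  constructor
  · omega
  · exact hRa2
end

section
/- Let p₁, …, p₅ be five points of ℝ³ in general position, meaning that every four of the five points are affinely independent. Then there exist indices i ≠ j in {1, …, 5} such that every affine plane containing p_i and p_j separates the remaining three points into two non-trivial sets: for every nonzero linear functional φ : ℝ³ → ℝ and every c ∈ ℝ with φ(p_i) = φ(p_j) = c, there exist k, l ∈ {1, …, 5} \ {i, j} with φ(p_k) < c and φ(p_l) > c. -/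
lemma coplanar_not_affineIndependent {ι : Type*} [Fintype ι] (h4 : Fintype.card ι = 4)
    (q : ι → Fin 3 → ℝ) (φ : (Fin 3 → ℝ) →ₗ[ℝ] ℝ) (hφ : φ ≠ 0) (c : ℝ)
    (hc : ∀ m, φ (q m) = c) : ¬ AffineIndependent ℝ q := by
  intro h
  have hfr : Module.finrank ℝ (vectorSpan ℝ (Set.range q)) = 3 :=
    h.finrank_vectorSpan (by rw [h4])
  have hsub : vectorSpan ℝ (Set.range q) ≤ LinearMap.ker φ := by
    rw [vectorSpan, Submodule.span_le]
    rintro v ⟨x, ⟨m, rfl⟩, y, ⟨n, rfl⟩, rfl⟩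
    simp [LinearMap.mem_ker, vsub_eq_sub, map_sub, hc]
  have hrange : Module.finrank ℝ (LinearMap.range φ) = 1 := by
    have : LinearMap.range φ = ⊤ := by
      rcases IsSimpleOrder.eq_bot_or_eq_top (LinearMap.range φ) with hb | ht
      · exact absurd (LinearMap.range_eq_bot.1 hb) hφ
      · exact ht
    rw [this]
    simp
  have hrn := LinearMap.finrank_range_add_finrank_ker φ
  have hdim : Module.finrank ℝ (Fin 3 → ℝ) = 3 := by simp
  have hker : Module.finrank ℝ (LinearMap.ker φ) = 2 := by omega
  have hle := Submodule.finrank_mono hsub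
  omega

/-- Given five points of `ℝ³` in general position (every four of them
affinely independent), there are indices `i ≠ j` such that every affine plane through
`p i` and `p j` (zero level set of a nonzero linear functional) strictly separates the
remaining three points non-trivially. -/
theorem five_points_separating_pair
    (p : Fin 5 → (Fin 3 → ℝ))
    (hgen : ∀ s : Finset (Fin 5), s.card = 4 →
      AffineIndependent ℝ (fun i : {x // x ∈ s} => p i)) :
    ∃ i j : Fin 5, i ≠ j ∧
      ∀ (φ : (Fin 3 → ℝ) →ₗ[ℝ] ℝ) (c : ℝ), φ ≠ 0 →
        φ (p i) = c → φ (p j) = c →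
        ∃ k l : Fin 5, k ≠ i ∧ k ≠ j ∧ l ≠ i ∧ l ≠ j ∧
          φ (p k) < c ∧ c < φ (p l) := by
  classical
  -- Five points in ℝ³ are affinely dependent.
  have hnot : ¬ AffineIndependent ℝ p := by
    intro h
    have hfr : Module.finrank ℝ (vectorSpan ℝ (Set.range p)) = 4 :=
      h.finrank_vectorSpan (by simp)
    have hle : Module.finrank ℝ (vectorSpan ℝ (Set.range p)) ≤
        Module.finrank ℝ (Fin 3 → ℝ) := Submodule.finrank_le _
    have hdim : Module.finrank ℝ (Fin 3 → ℝ) = 3 := by simp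
    omega
  rw [affineIndependent_iff] at hnot
  push_neg at hnot
  obtain ⟨s₀, w₀, hw₀sum, hw₀comb, e, he, hwe⟩ := hnot
  -- Extend the weights by zero to all of `Fin 5`.
  set w : Fin 5 → ℝ := fun m => if m ∈ s₀ then w₀ m else 0 with hwdef
  have hsum : ∑ m, w m = 0 := by
    rw [show (∑ m, w m) = ∑ m ∈ Finset.univ ∩ s₀, w₀ m from Finset.sum_ite_mem _ _ _]
    rwa [Finset.univ_inter]
  have hcomb : ∑ m, w m • p m = 0 := by
    have : ∀ m, w m • p m = if m ∈ s₀ then w₀ m • p m else 0 := by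
      intro m; by_cases hm : m ∈ s₀ <;> simp [hwdef, hm]
    rw [Finset.sum_congr rfl fun m _ => this m]
    rw [Finset.sum_ite_mem, Finset.univ_inter]
    exact hw₀comb
  have hwe' : w e ≠ 0 := by simpa [hwdef, he] using hwe
  -- Every weight is nonzero, by general position.
  have hall : ∀ m, w m ≠ 0 := by
    intro i
    by_contra hi0
    have hs : (Finset.univ.erase i).card = 4 := by simp
    have h4 := hgen _ hs
    rw [affineIndependent_iff] at h4
    have hsum' : ∑ k : {x // x ∈ Finset.univ.erase i}, w k.val = 0 := by
      rw [Finset.sum_coe_sort (Finset.univ.erase i) w]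
      have := Finset.sum_erase_add Finset.univ w (Finset.mem_univ i)
      rw [hsum] at this
      rw [hi0] at this
      linarith [this]
    have hcomb' : ∑ k : {x // x ∈ Finset.univ.erase i}, w k.val • p k.val = 0 := by
      rw [Finset.sum_coe_sort (Finset.univ.erase i) (fun m => w m • p m)]
      have h' := Finset.sum_erase_add Finset.univ (fun m => w m • p m) (Finset.mem_univ i)
      rw [hcomb] at h'
      simpa [hi0] using h'
    have hz := h4 Finset.univ (fun k => w k.val) (by simpa using hsum') (by simpa using hcomb')
    have : ∀ m, w m = 0 := by
      intro m
      by_cases hm : m = i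
      · rw [hm]; exact hi0
      · exact hz ⟨m, Finset.mem_erase.2 ⟨hm, Finset.mem_univ m⟩⟩ (Finset.mem_univ _)
    exact hwe' (this e)
  -- Find three indices whose weights share a (strict) sign.
  obtain ⟨v, s, hv0, hvp, hscard, hspos⟩ :
      ∃ (v : Fin 5 → ℝ) (s : Finset (Fin 5)), (∑ m, v m = 0) ∧ (∑ m, v m • p m = 0) ∧
        s.card = 3 ∧ ∀ k ∈ s, 0 < v k := by
    rcases le_or_gt 3 (Finset.univ.filter (fun m => 0 < w m)).card with h | h
    · obtain ⟨s, hs, hcard⟩ := Finset.exists_subset_card_eq h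
      exact ⟨w, s, hsum, hcomb, hcard, fun k hk => (Finset.mem_filter.1 (hs hk)).2⟩
    · have hpart := Finset.card_filter_add_card_filter_not
        (s := (Finset.univ : Finset (Fin 5))) (p := fun m => 0 < w m)
      have hcu : (Finset.univ : Finset (Fin 5)).card = 5 := by simp
      have hmono : (Finset.univ.filter (fun m => ¬ 0 < w m)) ⊆
          Finset.univ.filter (fun m => 0 < -w m) := by
        intro m hm
        rw [Finset.mem_filter] at hm ⊢
        refine ⟨hm.1, ?_⟩
        rcases lt_trichotomy (w m) 0 with h' | h' | h'
        · linarith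
        · exact absurd h' (hall m)
        · exact absurd h' hm.2
      have h3 : 3 ≤ (Finset.univ.filter (fun m => 0 < -w m)).card := by
        have := Finset.card_le_card hmono
        omega
      obtain ⟨s, hs, hcard⟩ := Finset.exists_subset_card_eq h3
      refine ⟨-w, s, by simpa using congrArg Neg.neg hsum, ?_, hcard,
        fun k hk => (Finset.mem_filter.1 (hs hk)).2⟩
      have : ∑ m, (-w) m • p m = -∑ m, w m • p m := by
        rw [← Finset.sum_neg_distrib]
        exact Finset.sum_congr rfl fun m _ => by simp [neg_smul]
      rw [this, hcomb]
      simp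
  -- The complement of `s` consists of two indices `i ≠ j`.
  have hc2 : sᶜ.card = 2 := by
    rw [Finset.card_compl, hscard]
    simp
  obtain ⟨i, j, hij, hts⟩ := Finset.card_eq_two.1 hc2
  have hks : ∀ k ∈ s, k ≠ i ∧ k ≠ j := by
    intro k hk
    constructor
    · rintro rfl
      have : k ∈ sᶜ := by rw [hts]; simp
      exact (Finset.mem_compl.1 this) hk
    · rintro rfl
      have : k ∈ sᶜ := by rw [hts]; simp
      exact (Finset.mem_compl.1 this) hk
  refine ⟨i, j, hij, ?_⟩
  intro φ c hφ hci hcj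
  -- The weighted sum of (φ (p k) - c) over s vanishes.
  have hφ0 : ∑ m, v m * φ (p m) = 0 := by
    have := congrArg φ hvp
    rw [map_sum] at this
    simpa [smul_eq_mul] using this
  have hφsum : ∑ m, v m * (φ (p m) - c) = 0 := by
    have : ∀ m : Fin 5, v m * (φ (p m) - c) = v m * φ (p m) - v m * c := fun m => by ring
    rw [Finset.sum_congr rfl fun m _ => this m, Finset.sum_sub_distrib, hφ0,
      ← Finset.sum_mul, hv0]
    ring
  have hcompl : ∑ k ∈ sᶜ, v k * (φ (p k) - c) = 0 := by
    rw [hts, Finset.sum_pair hij, hci, hcj]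
    ring
  have hssum : ∑ k ∈ s, v k * (φ (p k) - c) = 0 := by
    have hsplit := Finset.sum_add_sum_compl s (fun m => v m * (φ (p m) - c))
    rw [hφsum, hcompl] at hsplit
    linarith
  -- If all three remaining points were on the plane, four coplanar points contradict hgen.
  have key : (∀ k ∈ s, φ (p k) = c) → False := by
    intro hallc
    have hall5 : ∀ m, φ (p m) = c := by
      intro m
      by_cases hm : m ∈ s
      · exact hallc m hm
      · have : m ∈ sᶜ := Finset.mem_compl.2 hm
        rw [hts, Finset.mem_insert, Finset.mem_singleton] at this
        rcases this with rfl | rfl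
        · exact hci
        · exact hcj
    have h4 := hgen ({0, 1, 2, 3} : Finset (Fin 5)) (by decide)
    exact coplanar_not_affineIndependent (by simp [Fintype.card_coe]; decide)
      (fun k : {x // x ∈ ({0, 1, 2, 3} : Finset (Fin 5))} => p k) φ hφ c
      (fun m => hall5 m) h4
  have hlt : ∃ k ∈ s, φ (p k) < c := by
    by_contra hc'
    push_neg at hc'
    apply key
    intro k hk
    have hnn : ∀ k ∈ s, 0 ≤ v k * (φ (p k) - c) :=
      fun k hk => mul_nonneg (hspos k hk).le (sub_nonneg.2 (hc' k hk))
    have hz := (Finset.sum_eq_zero_iff_of_nonneg hnn).1 hssum k hk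
    rcases mul_eq_zero.1 hz with h' | h'
    · exact absurd h' (hspos k hk).ne'
    · linarith [sub_eq_zero.1 h']
  have hgt : ∃ l ∈ s, c < φ (p l) := by
    by_contra hc'
    push_neg at hc'
    apply key
    intro k hk
    have hnp : ∀ k ∈ s, v k * (φ (p k) - c) ≤ 0 :=
      fun k hk => mul_nonpos_of_nonneg_of_nonpos (hspos k hk).le (sub_nonpos.2 (hc' k hk))
    have hz := (Finset.sum_eq_zero_iff_of_nonpos hnp).1 hssum k hk
    rcases mul_eq_zero.1 hz with h' | h'
    · exact absurd h' (hspos k hk).ne'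
    · linarith [sub_eq_zero.1 h']
  obtain ⟨k, hk, hklt⟩ := hlt
  obtain ⟨l, hl, hlgt⟩ := hgt
  exact ⟨k, l, (hks k hk).1, (hks k hk).2, (hks l hl).1, (hks l hl).2, hklt, hlgt⟩
end

section
/- Let Λ be a lattice in ℂ² and let L be a ℂ-linear automorphism of ℂ² with L(Λ) = Λ whose characteristic polynomial is (X − α)(X − β) with complex numbers satisfying |α| < 1 < |β| (a loxodromic automorphism). Let L̄ denote the induced group automorphism of the torus A = ℂ²/Λ. Then: (1) for every t ∈ A the affine map x ↦ L̄(x) + t of A has a fixed point; (2) the set of periodic points of L̄ (points x with L̄ᵏ(x) = x for some k ≥ 1) is exactly the torsion subgroup of A. -/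
/-!
No eigenvalue of `L` lies on the unit circle, so the characteristic polynomial of `L` is coprime
to `Xⁿ - 1` and `Lⁿ - 1` is invertible for every `n ≥ 1`; for `n = 1` this solves
`L x - x = -t`. If `L̄ⁿ` fixes the class of `y`, then `(Lⁿ - 1) y ∈ Λ`; since `Lⁿ - 1` maps `Λ`
injectively onto a sublattice of some finite index `q`, we get `q • y ∈ Λ`. Conversely, the
`q`-torsion of `ℂ²/Λ` is finite (it embeds into `Λ/qΛ`) and mapped injectively into itself
by `L̄`, so each of its points is periodic.
-/

open Polynomial Function

theorem Polynomial.isCoprime_X_sub_C_X_pow_sub_one {K : Type*} [NormedField K] {γ : K}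
    (hγ : ‖γ‖ ≠ 1) {n : ℕ} (hn : n ≠ 0) : IsCoprime (X - C γ) (X ^ n - 1 : K[X]) := by
  refine (irreducible_X_sub_C γ).coprime_iff_not_dvd.mpr fun hdvd => hγ ?_
  have hγn : γ ^ n = 1 := by simpa [dvd_iff_isRoot, sub_eq_zero] using hdvd
  exact (pow_eq_one_iff_of_nonneg (norm_nonneg γ) hn).mp (by rw [← norm_pow, hγn, norm_one])

namespace Module.End

theorem bijective_aeval_of_isCoprime_charpoly {R M : Type*} [CommRing R] [AddCommGroup M]
    [Module R M] [Module.Free R M] [Module.Finite R M] (f : Module.End R M) {p : R[X]}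
    (h : IsCoprime f.charpoly p) : Bijective (aeval f p) := by
  have hker : LinearMap.ker (aeval f f.charpoly) = ⊤ := by simp [LinearMap.aeval_self_charpoly]
  have hrange : LinearMap.range (aeval f f.charpoly) = ⊥ := by
    simp [LinearMap.aeval_self_charpoly]
  refine ⟨LinearMap.ker_eq_bot.mp ?_, LinearMap.range_eq_top.mp ?_⟩
  · simpa [hker] using disjoint_ker_aeval_of_isCoprime f h
  · simpa [hrange] using sup_aeval_range_eq_top_of_isCoprime f h

theorem bijective_pow_sub_one_of_charpoly_eq {K V : Type*} [NormedField K]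
    [AddCommGroup V] [Module K V] [FiniteDimensional K V] {f : Module.End K V} {α β : K}
    (hα : ‖α‖ ≠ 1) (hβ : ‖β‖ ≠ 1) (hf : f.charpoly = (X - C α) * (X - C β)) {n : ℕ}
    (hn : n ≠ 0) : Bijective ⇑(f ^ n - 1) := by
  have hcop : IsCoprime f.charpoly (X ^ n - 1) := hf ▸
    (isCoprime_X_sub_C_X_pow_sub_one hα hn).mul_left (isCoprime_X_sub_C_X_pow_sub_one hβ hn)
  simpa using bijective_aeval_of_isCoprime_charpoly f hcop

end Module.End

theorem AddSubgroup.exists_nsmul_mem_of_apply_mem {E : Type*} [AddCommGroup E]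
    {Λ : AddSubgroup E} [Module.Free ℤ Λ] [Module.Finite ℤ Λ] {P : E →+ E}
    (hP : Injective P) (hPΛ : ∀ x ∈ Λ, P x ∈ Λ) {y : E} (hy : P y ∈ Λ) :
    ∃ q : ℕ, 0 < q ∧ q • y ∈ Λ := by
  let φ : Λ →+ Λ := (P.comp Λ.subtype).codRestrict Λ fun x => hPΛ x x.2
  have hφ : Injective φ := fun a b h => Subtype.ext (hP (congrArg Subtype.val h))
  have : Finite (Λ ⧸ φ.range) := Submodule.finiteQuotientOfFreeOfRankEq
    (LinearMap.range φ.toIntLinearMap) (LinearMap.finrank_range_of_inj hφ)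
  have : φ.range.FiniteIndex := AddSubgroup.finiteIndex_of_finite_quotient
  obtain ⟨w, hw⟩ := φ.range.nsmul_index_mem ⟨P y, hy⟩
  refine ⟨φ.range.index, Nat.pos_of_ne_zero AddSubgroup.FiniteIndex.index_ne_zero, ?_⟩
  have : P w = P (φ.range.index • y) := by
    rw [map_nsmul]
    exact congrArg Subtype.val hw
  exact hP this ▸ w.2

theorem QuotientAddGroup.finite_setOf_nsmul_eq_zero {E : Type*} [AddCommGroup E]
    [IsAddTorsionFree E] {Λ : AddSubgroup E} [Module.Free ℤ Λ] [Module.Finite ℤ Λ] {q : ℕ}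
    (hq : q ≠ 0) : {x : E ⧸ Λ | q • x = 0}.Finite := by
  let N := (nsmulAddMonoidHom (α := Λ) q).range
  have : N.FiniteIndex := ⟨by rw [AddSubgroup.index_range_nsmul]; positivity⟩
  have hmem (x : {x : E ⧸ Λ | q • x = 0}) : q • x.1.out ∈ Λ := by
    rw [← QuotientAddGroup.eq_zero_iff, QuotientAddGroup.mk_nsmul, QuotientAddGroup.out_eq']
    exact x.2
  let g (x : {x : E ⧸ Λ | q • x = 0}) : Λ ⧸ N := QuotientAddGroup.mk ⟨_, hmem x⟩
  have hg : Injective g := by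
    intro x y hxy
    obtain ⟨w, hw⟩ := QuotientAddGroup.eq.mp hxy
    have hw' : q • (w : E) = q • (-x.1.out + y.1.out) := by
      simpa [nsmul_add] using congrArg Subtype.val hw
    apply Subtype.ext
    rw [← QuotientAddGroup.out_eq' x.1, ← QuotientAddGroup.out_eq' y.1, QuotientAddGroup.eq]
    exact nsmul_right_injective hq hw' ▸ w.2
  exact Set.finite_coe_iff.mp (Finite.of_injective g hg)

theorem Function.Injective.mem_periodicPts_of_mapsTo {α : Type*} {f : α → α} (hf : Injective f)
    {s : Set α} (hs : s.Finite) (hfs : Set.MapsTo f s s) {x : α} (hx : x ∈ s) :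
    x ∈ periodicPts f := by
  have := hs.to_subtype
  obtain ⟨n, hn, hper⟩ := (hfs.restrict_inj.mpr hf.injOn).mem_periodicPts ⟨x, hx⟩
  refine ⟨n, hn, ?_⟩
  have := congrArg Subtype.val hper
  rwa [hfs.iterate_restrict] at this

namespace QuotientAddGroup

variable {E : Type*} [AddCommGroup E] {Λ : AddSubgroup E} {Fbar : E ⧸ Λ → E ⧸ Λ}

theorem exists_add_eq_self {F : E → E} (hFbar : ∀ x, Fbar (mk x) = mk (F x))
    (hF : Surjective fun x => F x - x) (t : E ⧸ Λ) : ∃ x, Fbar x + t = x := by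
  induction t using induction_on with | H y =>
  obtain ⟨x, hx⟩ := hF (-y)
  have hx' : F x + y = x := by
    simp only at hx
    linear_combination (norm := abel) hx
  exact ⟨mk x, by rw [hFbar, ← mk_add, hx']⟩

theorem iterate_mk {F : E → E} (hFbar : ∀ x, Fbar (mk x) = mk (F x)) (n : ℕ) (x : E) :
    Fbar^[n] (mk x) = mk (F^[n] x) :=
  (Semiconj.iterate_right (fun x => (hFbar x).symm) n x).symm

variable {F : E →+ E}

theorem injective_of_apply_mem_imp (hFbar : ∀ x, Fbar (mk x) = mk (F x))
    (hFΛ : ∀ x, F x ∈ Λ → x ∈ Λ) : Injective Fbar := by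
  intro a b hab
  induction a using induction_on with | H a =>
  induction b using induction_on with | H b =>
  rw [hFbar, hFbar, QuotientAddGroup.eq, ← map_neg, ← map_add] at hab
  exact QuotientAddGroup.eq.mpr (hFΛ _ hab)

theorem exists_nsmul_eq_zero_of_iterate_eq_self [Module.Free ℤ Λ] [Module.Finite ℤ Λ]
    (hFbar : ∀ x, Fbar (mk x) = mk (F x)) (hFΛ : ∀ x ∈ Λ, F x ∈ Λ) {n : ℕ}
    (hinj : Injective fun x => F^[n] x - x) {x : E ⧸ Λ} (hx : Fbar^[n] x = x) :
    ∃ q : ℕ, 0 < q ∧ q • x = 0 := by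
  induction x using induction_on with | H y =>
  let P : E →+ E := AddMonoidHom.mk' (fun z => F^[n] z - z) fun a b => by
    simp only [iterate_map_add]; abel
  have hPΛ (z : E) (hz : z ∈ Λ) : P z ∈ Λ := Λ.sub_mem (Set.MapsTo.iterate hFΛ n hz) hz
  have hPy : P y ∈ Λ := by
    rw [iterate_mk hFbar, QuotientAddGroup.eq] at hx
    simpa [P, neg_add_eq_sub] using Λ.neg_mem hx
  obtain ⟨q, hq, hqy⟩ := AddSubgroup.exists_nsmul_mem_of_apply_mem (P := P) hinj hPΛ hPy
  exact ⟨q, hq, by rwa [← mk_nsmul, eq_zero_iff]⟩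

theorem mem_periodicPts_of_nsmul_eq_zero [IsAddTorsionFree E] [Module.Free ℤ Λ]
    [Module.Finite ℤ Λ] (hFbar : ∀ x, Fbar (mk x) = mk (F x)) (hFΛ : ∀ x, F x ∈ Λ → x ∈ Λ)
    {q : ℕ} (hq : q ≠ 0) {x : E ⧸ Λ} (hx : q • x = 0) : x ∈ periodicPts Fbar := by
  refine (injective_of_apply_mem_imp hFbar hFΛ).mem_periodicPts_of_mapsTo
    (finite_setOf_nsmul_eq_zero hq) (fun z hz => ?_) hx
  induction z using induction_on with | H z =>
  show q • Fbar (mk z) = 0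
  rw [hFbar, ← mk_nsmul, ← map_nsmul, ← hFbar, mk_nsmul, hz, ← mk_zero, hFbar, map_zero, mk_zero]

end QuotientAddGroup

/-- Let `Λ` be a lattice in `ℂ²` and `L` a `ℂ`-linear automorphism of `ℂ²`
with `L(Λ) = Λ` whose characteristic polynomial is `(X - α)(X - β)` with `|α| < 1 < |β|`
(a loxodromic automorphism). Let `L̄` be the induced automorphism of `A = ℂ²/Λ`. Then
(1) for every `t ∈ A`, `x ↦ L̄ x + t` has a fixed point, and
(2) the periodic points of `L̄` are exactly the torsion points of `A`. -/
theorem loxodromic_torus_automorphism_fixed_and_periodic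
    (Λ : AddSubgroup (Fin 2 → ℂ))
    (hdisc : DiscreteTopology Λ)
    (hspan : Submodule.span ℝ (Λ : Set (Fin 2 → ℂ)) = ⊤)
    (L : (Fin 2 → ℂ) ≃ₗ[ℂ] (Fin 2 → ℂ))
    (hLΛ : ∀ x : Fin 2 → ℂ, x ∈ Λ ↔ L x ∈ Λ)
    (α β : ℂ) (hα : ‖α‖ < 1) (hβ : 1 < ‖β‖)
    (hchar : LinearMap.charpoly (L.toLinearMap) =
      (Polynomial.X - Polynomial.C α) * (Polynomial.X - Polynomial.C β))
    (Lbar : ((Fin 2 → ℂ) ⧸ Λ) → ((Fin 2 → ℂ) ⧸ Λ))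
    (hLbar : ∀ x : Fin 2 → ℂ,
      Lbar (QuotientAddGroup.mk x) = QuotientAddGroup.mk (L x)) :
    (∀ t : (Fin 2 → ℂ) ⧸ Λ, ∃ x, Lbar x + t = x) ∧
    (∀ x : (Fin 2 → ℂ) ⧸ Λ,
      (∃ n : ℕ, 1 ≤ n ∧ Lbar^[n] x = x) ↔ (∃ q : ℕ, 1 ≤ q ∧ q • x = 0)) := by
  have : DiscreteTopology Λ.toIntSubmodule := hdisc
  have : IsZLattice ℝ Λ.toIntSubmodule := ⟨hspan⟩
  have : Module.Free ℤ Λ := ZLattice.module_free ℝ Λ.toIntSubmodule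
  have : Module.Finite ℤ Λ := ZLattice.module_finite ℝ Λ.toIntSubmodule
  have hbij (n : ℕ) (hn : n ≠ 0) : Bijective fun x => L^[n] x - x := by
    have h := Module.End.bijective_pow_sub_one_of_charpoly_eq hα.ne hβ.ne' hchar hn
    convert h using 1
    ext x
    simp [Module.End.pow_apply]
  let F : (Fin 2 → ℂ) →+ (Fin 2 → ℂ) := L.toLinearMap.toAddMonoidHom
  refine ⟨QuotientAddGroup.exists_add_eq_self hLbar (hbij 1 one_ne_zero).2, fun x => ⟨?_, ?_⟩⟩
  · rintro ⟨n, hn, hx⟩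
    exact QuotientAddGroup.exists_nsmul_eq_zero_of_iterate_eq_self (F := F) hLbar
      (fun x => (hLΛ x).1) (hbij n (by omega)).1 hx
  · rintro ⟨q, hq, hx⟩
    exact QuotientAddGroup.mem_periodicPts_of_nsmul_eq_zero (F := F) hLbar
      (fun x => (hLΛ x).2) (by omega) hx
end
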